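/- Let n and m be positive integers and s, t > 0. Let X and Y be independent real random variables with the inverse-gamma distributions iG(n, s) and iG(m, t), respectively. Then Pr[X ≥ Y] = I_p(n, m), where p = s/(s+t) and I_p(n, m) is the regularized incomplete beta function. -/

import Mathlib

/-!
Since `1/X` and `1/Y` are independent with laws `Γ(n, s)` and `Γ(m, t)`, `Pr[X ≥ Y]` is the
`Γ(n, s) ⊗ Γ(m, t)`-mass of `{x ≤ y}`. Computing the inner `Γ(n, s)`-mass of `(0, y]` with
`x = y w`, `w ∈ (0, 1]`, and swapping the integrals, the `y`-integrand becomes a multiple of the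
`Γ(n + m, s w + t)` density, so integrating out `y` leaves
`∫₀¹ s^n t^m w^(n-1) / (s w + t)^(n+m) dw / B(n, m)`. The substitution `u = s w / (s w + t)`
turns this into `I_p(n, m)` with `p = s / (s + t)`.
-/

open MeasureTheory ProbabilityTheory

/-- The regularized incomplete beta function `I_p(n, m)` for positive integer
parameters `n, m`. -/
noncomputable def regIncBeta (n m : ℕ) (p : ℝ) : ℝ :=
  (Real.Gamma (n + m) / (Real.Gamma n * Real.Gamma m)) *
    ∫ u in (0:ℝ)..p, u ^ (n - 1) * (1 - u) ^ (m - 1)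

/-- The density of the inverse-gamma distribution `iG(n, s)` with shape `n` and
scale `s`: `s^n/Γ(n) ⬝ x^{-n-1} e^{-s/x}` on `(0, ∞)`. -/
noncomputable def invGammaPDFReal (n : ℕ) (s x : ℝ) : ℝ :=
  if 0 < x then s ^ n / Real.Gamma n * x ^ (-(n : ℤ) - 1) * Real.exp (-(s / x)) else 0

/-- The inverse-gamma measure `iG(n, s)` on `ℝ`. -/
noncomputable def invGammaMeasure (n : ℕ) (s : ℝ) : Measure ℝ :=
  volume.withDensity fun x => ENNReal.ofReal (invGammaPDFReal n s x)

open Real Set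
open scoped ENNReal

theorem setLIntegral_inter_Ioi_zero {f : ℝ → ℝ≥0∞} (hf : ∀ x < 0, f x = 0) (A : Set ℝ) :
    ∫⁻ x in A ∩ Ioi 0, f x = ∫⁻ x in A, f x := by
  have hneg : ∫⁻ x in A \ Ioi 0, f x = 0 := by
    refine le_antisymm ?_ bot_le
    calc ∫⁻ x in A \ Ioi 0, f x ≤ ∫⁻ x in Iic 0, f x :=
          lintegral_mono_set fun _ hx => mem_Iic.mpr (not_lt.mp hx.2)
      _ = ∫⁻ x in Iio 0, f x := setLIntegral_congr Iio_ae_eq_Iic.symm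
      _ = 0 := by rw [setLIntegral_congr_fun measurableSet_Iio hf, lintegral_zero]
  rw [← lintegral_inter_add_sdiff _ A measurableSet_Ioi, hneg, add_zero]

theorem withDensity_Iic_eq_lintegral_Ioc_zero_one {f : ℝ → ℝ≥0∞} (hf : ∀ x < 0, f x = 0)
    (y : ℝ) :
    volume.withDensity f (Iic y) = ∫⁻ w in Ioc 0 1, ENNReal.ofReal y * f (y * w) := by
  rw [withDensity_apply _ measurableSet_Iic, ← setLIntegral_inter_Ioi_zero hf, Iic_inter_Ioi]
  rcases le_or_gt y 0 with hy | hy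
  · simp [Ioc_eq_empty_of_le hy, ENNReal.ofReal_of_nonpos hy]
  · have himage : Ioc 0 y = (y * ·) '' Ioc 0 1 := by simp [image_mul_left_Ioc hy]
    rw [himage, lintegral_image_eq_lintegral_abs_deriv_mul measurableSet_Ioc
      (fun w _ => (hasDerivAt_const_mul y).hasDerivWithinAt) (mul_right_injective₀ hy.ne').injOn]
    simp [abs_of_pos hy]

theorem invGammaPDFReal_eq_mul_gammaPDFReal_inv (n : ℕ) (s : ℝ) {x : ℝ} (hx : 0 < x) :
    invGammaPDFReal n s x = (x ^ 2)⁻¹ * gammaPDFReal n s x⁻¹ := by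
  rw [invGammaPDFReal, gammaPDFReal, if_pos hx, if_pos (inv_nonneg.mpr hx.le), inv_rpow hx.le,
    ← rpow_intCast, rpow_natCast, div_eq_mul_inv s x]
  push_cast
  rw [rpow_sub_one hx.ne', rpow_sub_one hx.ne', rpow_neg hx.le]
  field_simp

theorem invGammaMeasure_eq_map_inv (n : ℕ) (s : ℝ) :
    invGammaMeasure n s = (gammaMeasure n s).map Inv.inv := by
  ext A hA
  have hzero : ∀ x < 0, ENNReal.ofReal (invGammaPDFReal n s x) = 0 := fun x hx => by
    simp [invGammaPDFReal, not_lt.mpr hx.le]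
  have himage : Inv.inv ⁻¹' A ∩ Ioi 0 = Inv.inv '' (A ∩ Ioi (0 : ℝ)) := by ext x; simp
  rw [Measure.map_apply measurable_inv hA, invGammaMeasure, gammaMeasure,
    withDensity_apply _ hA, withDensity_apply _ (measurable_inv hA),
    ← setLIntegral_inter_Ioi_zero hzero, ← setLIntegral_inter_Ioi_zero (fun _ => gammaPDF_of_neg),
    himage,
    lintegral_image_eq_lintegral_abs_deriv_mul (hA.inter measurableSet_Ioi)
      (fun x hx => (hasDerivAt_inv hx.2.ne').hasDerivWithinAt) inv_injective.injOn]
  refine setLIntegral_congr_fun (hA.inter measurableSet_Ioi) fun x hx => ?_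
  have hx0 : 0 < x := hx.2
  rw [invGammaPDFReal_eq_mul_gammaPDFReal_inv n s hx0, ENNReal.ofReal_mul (by positivity),
    abs_neg, abs_of_pos (by positivity), gammaPDF]

theorem ae_pos_gammaMeasure (a r : ℝ) : ∀ᵐ x ∂gammaMeasure a r, 0 < x := by
  simp only [ae_iff, not_lt]
  change gammaMeasure a r (Iic 0) = 0
  rw [gammaMeasure, withDensity_apply _ measurableSet_Iic,
    ← setLIntegral_inter_Ioi_zero (fun _ => gammaPDF_of_neg), Iic_inter_Ioi, Ioc_self,
    Measure.restrict_empty, lintegral_zero_measure]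

theorem prod_map_inv_setOf_le {μ ν : Measure ℝ} [SFinite μ] [SFinite ν]
    (hμ : ∀ᵐ x ∂μ, 0 < x) (hν : ∀ᵐ y ∂ν, 0 < y) :
    (μ.map Inv.inv).prod (ν.map Inv.inv) {q | q.2 ≤ q.1} = μ.prod ν {q | q.1 ≤ q.2} := by
  rw [Measure.map_prod_map _ _ measurable_inv measurable_inv,
    Measure.map_apply (measurable_inv.prodMap measurable_inv)
      (measurableSet_le measurable_snd measurable_fst)]
  refine measure_congr ?_
  filter_upwards [Measure.quasiMeasurePreserving_fst.ae hμ,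
    Measure.quasiMeasurePreserving_snd.ae hν] with q h₁ h₂
  exact propext (inv_le_inv₀ h₂ h₁)

theorem mul_gammaPDFReal_mul_gammaPDFReal {a b s t y w : ℝ} (ha : 0 < a) (hb : 0 < b)
    (hs : 0 < s) (ht : 0 < t) (hy : 0 < y) (hw : 0 < w) :
    y * gammaPDFReal a s (y * w) * gammaPDFReal b t y =
      Gamma (a + b) / (Gamma a * Gamma b) *
        (s ^ a * t ^ b * w ^ (a - 1) / (s * w + t) ^ (a + b)) *
        gammaPDFReal (a + b) (s * w + t) y := by
  have hc : 0 < s * w + t := by positivity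
  simp only [gammaPDFReal, if_pos hy.le, if_pos (mul_pos hy hw).le]
  have hexp : rexp (-(s * (y * w))) * rexp (-(t * y)) = rexp (-((s * w + t) * y)) := by
    rw [← Real.exp_add]; ring_nf
  rw [mul_rpow hy.le hw.le, rpow_add hc, rpow_sub_one hy.ne', rpow_sub_one hw.ne',
    rpow_sub_one hy.ne', rpow_sub_one hy.ne', rpow_add hy, ← hexp]
  have := (Gamma_pos_of_pos ha).ne'
  have := (Gamma_pos_of_pos hb).ne'
  have := (Gamma_pos_of_pos (add_pos ha hb)).ne'
  field_simp

theorem image_mul_div_mul_add_Ioc_zero_one {s t : ℝ} (hs : 0 < s) (ht : 0 < t) :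
    (fun w => s * w / (s * w + t)) '' Ioc 0 1 = Ioc 0 (s / (s + t)) := by
  ext u
  constructor
  · rintro ⟨w, ⟨hw0, hw1⟩, rfl⟩
    refine ⟨by positivity, ?_⟩
    rw [div_le_div_iff₀ (by positivity) (by positivity)]
    nlinarith [mul_le_mul_of_nonneg_left hw1 (mul_pos hs ht).le]
  · rintro ⟨hu0, hup⟩
    have hu1 : 0 < 1 - u := by
      linarith [hup.trans_lt ((div_lt_one (by positivity)).mpr (by linarith : s < s + t))]
    refine ⟨t * u / (s * (1 - u)), ⟨by positivity, ?_⟩, ?_⟩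
    · rw [le_div_iff₀ (by positivity)] at hup
      rw [div_le_one (by positivity)]
      nlinarith
    · field_simp
      ring

theorem setLIntegral_Ioc_eq_setLIntegral_Ioc_rpow_mul_one_sub_rpow {s t : ℝ} (hs : 0 < s)
    (ht : 0 < t) (a b : ℝ) :
    ∫⁻ w in Ioc 0 1, ENNReal.ofReal (s ^ a * t ^ b * w ^ (a - 1) / (s * w + t) ^ (a + b)) =
      ∫⁻ u in Ioc 0 (s / (s + t)), ENNReal.ofReal (u ^ (a - 1) * (1 - u) ^ (b - 1)) := by
  set φ : ℝ → ℝ := fun w => s * w / (s * w + t)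
  have hden : ∀ w ∈ Ioc (0:ℝ) 1, 0 < s * w + t := fun w hw => by have := hw.1; positivity
  have himage : φ '' Ioc 0 1 = Ioc 0 (s / (s + t)) := image_mul_div_mul_add_Ioc_zero_one hs ht
  have hderiv :
      ∀ w ∈ Ioc (0:ℝ) 1, HasDerivWithinAt φ (s * t / (s * w + t) ^ 2) (Ioc 0 1) w := by
    intro w hw
    have hlin : HasDerivAt (fun w => s * w) s w := by simpa using (hasDerivAt_id w).const_mul s
    exact ((hlin.div (hlin.add_const t) (hden w hw).ne').congr_deriv (by ring)).hasDerivWithinAt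
  have hinj : InjOn φ (Ioc 0 1) := by
    intro w₁ hw₁ w₂ hw₂ h
    have := hden w₁ hw₁
    have := hden w₂ hw₂
    simp only [φ] at h
    field_simp at h
    exact mul_left_cancel₀ ht.ne' (by linarith)
  rw [← himage, lintegral_image_eq_lintegral_abs_deriv_mul measurableSet_Ioc hderiv hinj]
  refine setLIntegral_congr_fun measurableSet_Ioc fun w hw => ?_
  have hc := hden w hw
  have hw0 := hw.1
  rw [← ENNReal.ofReal_mul (abs_nonneg _)]
  congr 1
  have h1 : 1 - s * w / (s * w + t) = t / (s * w + t) := by field_simp; ring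
  simp only [φ]
  rw [h1, abs_of_pos (by positivity), div_rpow (by positivity) hc.le, div_rpow ht.le hc.le,
    mul_rpow hs.le hw0.le, rpow_add hc, rpow_sub_one hc.ne', rpow_sub_one hc.ne',
    rpow_sub_one hs.ne', rpow_sub_one ht.ne', rpow_sub_one hw0.ne']
  field_simp

theorem measurable_gammaPDF (a r : ℝ) : Measurable (gammaPDF a r) :=
  (measurable_gammaPDFReal a r).ennreal_ofReal

theorem lintegral_mul_gammaPDF_mul_gammaPDF {a b s t w : ℝ} (ha : 0 < a) (hb : 0 < b)
    (hs : 0 < s) (ht : 0 < t) (hw : 0 < w) :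
    ∫⁻ y, ENNReal.ofReal y * gammaPDF a s (y * w) * gammaPDF b t y =
      ENNReal.ofReal (Gamma (a + b) / (Gamma a * Gamma b)) *
        ENNReal.ofReal (s ^ a * t ^ b * w ^ (a - 1) / (s * w + t) ^ (a + b)) := by
  have hC : 0 ≤ Gamma (a + b) / (Gamma a * Gamma b) := by positivity
  have hae : ∀ᵐ y, ENNReal.ofReal y * gammaPDF a s (y * w) * gammaPDF b t y =
      ENNReal.ofReal (Gamma (a + b) / (Gamma a * Gamma b) *
        (s ^ a * t ^ b * w ^ (a - 1) / (s * w + t) ^ (a + b))) *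
        gammaPDF (a + b) (s * w + t) y := by
    filter_upwards [Measure.ae_ne volume (0:ℝ)] with y hy
    rcases lt_or_gt_of_ne hy with hy | hy
    · simp [gammaPDF_of_neg hy]
    · rw [gammaPDF, gammaPDF, gammaPDF, ← ENNReal.ofReal_mul hy.le,
        ← ENNReal.ofReal_mul (by have := gammaPDFReal_nonneg ha hs (y * w); positivity),
        ← ENNReal.ofReal_mul (by positivity), mul_gammaPDFReal_mul_gammaPDFReal ha hb hs ht hy hw]
  rw [lintegral_congr_ae hae, lintegral_const_mul _ (measurable_gammaPDF _ _),
    lintegral_gammaPDF_eq_one (add_pos ha hb) (by positivity), mul_one, ENNReal.ofReal_mul hC]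

theorem gammaMeasure_prod_setOf_le {a b s t : ℝ} (ha : 0 < a) (hb : 0 < b)
    (hs : 0 < s) (ht : 0 < t) :
    (gammaMeasure a s).prod (gammaMeasure b t) {q | q.1 ≤ q.2} =
      ENNReal.ofReal (Gamma (a + b) / (Gamma a * Gamma b)) *
        ∫⁻ u in Ioc 0 (s / (s + t)), ENNReal.ofReal (u ^ (a - 1) * (1 - u) ^ (b - 1)) := by
  have := isProbabilityMeasure_gammaMeasure ha hs
  have := isProbabilityMeasure_gammaMeasure hb ht
  have hinner : ∀ y, gammaPDF b t y * ∫⁻ w in Ioc 0 1, ENNReal.ofReal y * gammaPDF a s (y * w) =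
      ∫⁻ w in Ioc 0 1, ENNReal.ofReal y * gammaPDF a s (y * w) * gammaPDF b t y := fun y => by
    rw [mul_comm, ← lintegral_mul_const' (gammaPDF b t y) _ ENNReal.ofReal_ne_top]
  have hjoint : Measurable (Function.uncurry fun y w =>
      ENNReal.ofReal y * gammaPDF a s (y * w) * gammaPDF b t y) := by
    have := measurable_gammaPDF a s
    have := measurable_gammaPDF b t
    fun_prop
  rw [Measure.prod_apply_symm (measurableSet_le measurable_fst measurable_snd)]
  change ∫⁻ y, gammaMeasure a s (Iic y) ∂(volume.withDensity (gammaPDF b t)) = _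
  rw [lintegral_withDensity_eq_lintegral_mul₀ (measurable_gammaPDF b t).aemeasurable
    (Monotone.measurable fun _ _ h => measure_mono (Iic_subset_Iic.mpr h)).aemeasurable]
  simp_rw [Pi.mul_apply, gammaMeasure,
    withDensity_Iic_eq_lintegral_Ioc_zero_one (fun _ => gammaPDF_of_neg)]
  rw [lintegral_congr hinner, lintegral_lintegral_swap hjoint.aemeasurable,
    setLIntegral_congr_fun measurableSet_Ioc
      fun w hw => lintegral_mul_gammaPDF_mul_gammaPDF ha hb hs ht hw.1,
    lintegral_const_mul' _ _ ENNReal.ofReal_ne_top,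
    setLIntegral_Ioc_eq_setLIntegral_Ioc_rpow_mul_one_sub_rpow hs ht]

theorem regIncBeta_eq_toReal_lintegral {n m : ℕ} (hn : 0 < n) (hm : 0 < m) {p : ℝ}
    (hp0 : 0 ≤ p) (hp1 : p ≤ 1) :
    regIncBeta n m p = (ENNReal.ofReal (Gamma (n + m) / (Gamma n * Gamma m)) *
      ∫⁻ u in Ioc 0 p, ENNReal.ofReal (u ^ ((n : ℝ) - 1) * (1 - u) ^ ((m : ℝ) - 1))).toReal := by
  have hGamma : 0 ≤ Gamma (n + m) / (Gamma n * Gamma m) := by positivity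
  have hnonneg :
      0 ≤ᵐ[volume.restrict (Ioc 0 p)] fun u : ℝ => u ^ (n - 1) * (1 - u) ^ (m - 1) := by
    filter_upwards [ae_restrict_mem measurableSet_Ioc] with u hu
    have : 0 ≤ 1 - u := by linarith [hu.2]
    have := hu.1.le
    positivity
  simp_rw [← Nat.cast_pred hn, ← Nat.cast_pred hm, rpow_natCast]
  rw [← ofReal_integral_eq_lintegral_ofReal (by fun_prop : Continuous _).integrableOn_Ioc hnonneg,
    ← ENNReal.ofReal_mul hGamma,
    ENNReal.toReal_ofReal (mul_nonneg hGamma (integral_nonneg_of_ae hnonneg)),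
    regIncBeta, intervalIntegral.integral_of_le hp0]

/-- If `X ~ iG(n, s)` and `Y ~ iG(m, t)` are independent inverse-gamma random
variables, then `Pr[X ≥ Y] = I_p(n, m)` with `p = s/(s+t)`. -/
theorem prob_ge_eq_regIncBeta_invGamma
    {Ω : Type*} {mΩ : MeasurableSpace Ω} (P : Measure Ω) [IsProbabilityMeasure P]
    (n m : ℕ) (hn : 0 < n) (hm : 0 < m) (s t : ℝ) (hs : 0 < s) (ht : 0 < t)
    (X Y : Ω → ℝ)
    (hX : Measure.map X P = invGammaMeasure n s)
    (hY : Measure.map Y P = invGammaMeasure m t)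
    (hXY : IndepFun X Y P) :
    (P {ω | X ω ≥ Y ω}).toReal = regIncBeta n m (s / (s + t)) := by
  have := isProbabilityMeasure_gammaMeasure (Nat.cast_pos.mpr hn) hs
  have := isProbabilityMeasure_gammaMeasure (Nat.cast_pos.mpr hm) ht
  have := Measure.isProbabilityMeasure_map (μ := gammaMeasure n s) measurable_inv.aemeasurable
  have := Measure.isProbabilityMeasure_map (μ := gammaMeasure m t) measurable_inv.aemeasurable
  rw [invGammaMeasure_eq_map_inv] at hX hY
  have hXm : AEMeasurable X P := aemeasurable_of_map_neZero (by rw [hX]; infer_instance)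
  have hYm : AEMeasurable Y P := aemeasurable_of_map_neZero (by rw [hY]; infer_instance)
  have hlaw : P.map (fun ω => (X ω, Y ω)) =
      ((gammaMeasure n s).map Inv.inv).prod ((gammaMeasure m t).map Inv.inv) := by
    rw [(indepFun_iff_map_prod_eq_prod_map_map hXm hYm).mp hXY, hX, hY]
  have hp : s / (s + t) ≤ 1 := (div_le_one (by positivity)).mpr (by linarith)
  calc (P {ω | X ω ≥ Y ω}).toReal
      = (P.map (fun ω => (X ω, Y ω)) {q | q.2 ≤ q.1}).toReal := by
        rw [Measure.map_apply_of_aemeasurable (hXm.prodMk hYm)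
          (measurableSet_le measurable_snd measurable_fst)]
        rfl
    _ = ((gammaMeasure n s).prod (gammaMeasure m t) {q | q.1 ≤ q.2}).toReal := by
        rw [hlaw, prod_map_inv_setOf_le (ae_pos_gammaMeasure _ _) (ae_pos_gammaMeasure _ _)]
    _ = regIncBeta n m (s / (s + t)) := by
        rw [gammaMeasure_prod_setOf_le (Nat.cast_pos.mpr hn) (Nat.cast_pos.mpr hm) hs ht,
          regIncBeta_eq_toReal_lintegral hn hm (by positivity) hp]
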